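/- arXiv:2110.02742 — 2 statements merged into one kernel-verified Lean document; each statement's English description precedes it below -/
import Mathlib

section
/- Let n, p, m be positive integers, let w = (w_0,…,w_{n-1}) ∈ [−1,1]^n, and let x_{j,k} ∈ {0,1} for j = 0,…,n−1 and k = 1,…,p be binary digits, with |x⟩ := ⊗_{j=0}^{n−1}⊗_{k=1}^{p} |x_{j,k}⟩ ∈ ℂ^{2^{np}}. For c ∈ {1,…,m}, j ∈ {0,…,n−1}, k ∈ {1,…,p} and α ∈ ℝ, let cRz^{c,j,k}(α) be the diagonal unitary on ℂ^{2^m} ⊗ ℂ^{2^{np}} that multiplies a computational basis vector |a_1…a_m⟩ ⊗ |x_{0,1}…x_{n−1,p}⟩ by e^{2πiα} when a_c = 1 and x_{j,k} = 1, and fixes it otherwise, where |a_1…a_m⟩ is identified with |a⟩ for a = Σ_{c=1}^{m} a_c 2^{c−1}. Define U_{w,m} as the product (in any order; all factors commute) over c, j, k of (cRz^{c,j,k}(w_j/2^{m+k}))^{2^{c−1}}. Then U_{w,m}(H^{⊗m}|0⟩^{⊗m} ⊗ |x⟩) = (1/√(2^m)) Σ_{a=0}^{2^m−1} exp(2πi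 · a · (x̃ᵀw)/2^m) |a⟩ ⊗ |x⟩, where x̃ᵀw := Σ_{j=0}^{n−1} w_j Σ_{k=1}^{p} x_{j,k} 2^{−k}. -/
open Complex

/-- Kronecker product of vectors. -/
noncomputable def kronVec {α β : Type*} (u : α → ℂ) (v : β → ℂ) : α × β → ℂ :=
  fun q => u q.1 * v q.2

/-- The gate `cRz^{c,j,k}(α)` on `ℂ^{2^m} ⊗ ℂ^{2^{np}}`: the diagonal unitary multiplying
a computational basis vector `|a_1…a_m⟩ ⊗ |x_{0,1}…x_{n−1,p}⟩` by `e^{2πiα}` when `a_c = 1`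
and `x_{j,k} = 1`, and fixing it otherwise.  Here `ℂ^{2^m}` is identified with the space
with basis indexed by bit strings `Fin m → Fin 2` (the string `a₁…a_m` corresponding to
`|a⟩`, `a = Σ_c a_c 2^{c-1}`), and similarly for `ℂ^{2^{np}}`. -/
noncomputable def cRzGate (m n p : ℕ) (c : Fin m) (j : Fin n) (k : Fin p) (α : ℝ) :
    Matrix ((Fin m → Fin 2) × (Fin n × Fin p → Fin 2))
           ((Fin m → Fin 2) × (Fin n × Fin p → Fin 2)) ℂ :=
  Matrix.diagonal fun q =>
    if q.1 c = 1 ∧ q.2 (j, k) = 1 then Complex.exp (2 * Real.pi * Complex.I * α) else 1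

/-- The integer `a = Σ_{c=1}^{m} a_c 2^{c−1}` encoded by the ancilla bit string `a₁…a_m`. -/
def ancVal {m : ℕ} (a : Fin m → Fin 2) : ℕ := ∑ c : Fin m, (a c : ℕ) * 2 ^ (c : ℕ)

lemma listprod_diag {ι τ : Type*} [DecidableEq ι] [Fintype ι]
    (l : List τ) (D : τ → ι → ℂ) :
    (l.map (fun t => Matrix.diagonal (D t))).prod
      = Matrix.diagonal (fun i => (l.map (fun t => D t i)).prod) := by
  induction l with
  | nil => simp [Matrix.diagonal_one]
  | cons h t ih => simp [ih, Matrix.diagonal_mul_diagonal]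

/-- for `w ∈ [−1,1]^n` and binary digits `x_{j,k} ∈ {0,1}`, the operator
`U_{w,m}`, the product (in any order: the list `l` below enumerates the factors in an
arbitrary order; all factors commute) over `c ∈ {1,…,m}`, `j ∈ {0,…,n−1}`, `k ∈ {1,…,p}`
of `(cRz^{c,j,k}(w_j/2^{m+k}))^{2^{c−1}}`, satisfies
`U_{w,m}(H^{⊗m}|0⟩^{⊗m} ⊗ |x⟩) = (1/√(2^m)) Σ_a exp(2πi·a·(x̃ᵀw)/2^m)|a⟩ ⊗ |x⟩`,
where `x̃ᵀw = Σ_j w_j Σ_k x_{j,k} 2^{−k}` and `H^{⊗m}|0⟩^{⊗m} = (1/√(2^m)) Σ_a |a⟩`. -/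
theorem U_apply_hadamard_ket (n p m : ℕ) (hn : 0 < n) (hp : 0 < p) (hm : 0 < m)
    (w : Fin n → ℝ) (hw : ∀ j, w j ∈ Set.Icc (-1 : ℝ) 1)
    (x : Fin n × Fin p → Fin 2)
    (l : List (Fin m × Fin n × Fin p)) (hnodup : l.Nodup) (hmem : ∀ t, t ∈ l) :
    (l.map fun t =>
        (cRzGate m n p t.1 t.2.1 t.2.2 (w t.2.1 / 2 ^ (m + (t.2.2 : ℕ) + 1)))
          ^ (2 ^ (t.1 : ℕ))).prod.mulVec
      (kronVec (fun _ : Fin m → Fin 2 => ((Real.sqrt (2 ^ m) : ℝ) : ℂ)⁻¹)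
        (fun y : Fin n × Fin p → Fin 2 => if y = x then 1 else 0)) =
    fun q => ((Real.sqrt (2 ^ m) : ℝ) : ℂ)⁻¹ *
      Complex.exp (2 * Real.pi * Complex.I * (ancVal q.1 : ℕ) *
        ((∑ j : Fin n, w j * ∑ k : Fin p, ((x (j, k) : ℕ) : ℝ) / 2 ^ ((k : ℕ) + 1) : ℝ) : ℂ)
        / 2 ^ m) *
      (if q.2 = x then 1 else 0) := by
  classical
  set D : Fin m × Fin n × Fin p → ((Fin m → Fin 2) × (Fin n × Fin p → Fin 2)) → ℂ :=
    fun t q => Complex.exp (2 * Real.pi * Complex.I * ((q.1 t.1 : ℕ) : ℂ) * ((q.2 t.2 : ℕ) : ℂ) *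
      2 ^ (t.1 : ℕ) * (w t.2.1 : ℂ) / 2 ^ (m + (t.2.2 : ℕ) + 1)) with hD
  have hfac : ∀ t : Fin m × Fin n × Fin p,
      (cRzGate m n p t.1 t.2.1 t.2.2 (w t.2.1 / 2 ^ (m + (t.2.2 : ℕ) + 1))) ^ (2 ^ (t.1 : ℕ))
        = Matrix.diagonal (D t) := by
    intro t
    rw [cRzGate, Matrix.diagonal_pow, hD]
    refine congrArg Matrix.diagonal (funext fun q => ?_)
    have e1 : q.1 t.1 = 0 ∨ q.1 t.1 = 1 := by omega
    have e2 : q.2 (t.2.1, t.2.2) = 0 ∨ q.2 (t.2.1, t.2.2) = 1 := by omega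
    rcases e1 with h1 | h1 <;>
      rcases e2 with h2 | h2 <;>
      simp [Pi.pow_apply, h1, h2, ← Complex.exp_nat_mul]
    congr 1; push_cast; ring
  simp only [hfac, listprod_diag]
  funext q
  simp only [Matrix.mulVec_diagonal, kronVec]
  by_cases hx : q.2 = x
  · simp only [hx, if_pos rfl, mul_one]
    rw [← List.prod_toFinset _ hnodup]
    have huniv : l.toFinset = Finset.univ :=
      Finset.eq_univ_iff_forall.mpr fun t => List.mem_toFinset.mpr (hmem t)
    rw [huniv, ← Complex.exp_sum]
    have hanc : ((ancVal q.1 : ℕ) : ℂ) = ∑ c : Fin m, ((q.1 c : ℕ) : ℂ) * 2 ^ (c : ℕ) := by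
      simp [ancVal]
    have hS : ((∑ j : Fin n, w j * ∑ k : Fin p, ((x (j, k) : ℕ) : ℝ) / 2 ^ ((k : ℕ) + 1) : ℝ) : ℂ)
        = ∑ j : Fin n, (w j : ℂ) * ∑ k : Fin p, ((x (j, k) : ℕ) : ℂ) / 2 ^ ((k : ℕ) + 1) := by
      push_cast; rfl
    have hsum : (∑ t : Fin m × Fin n × Fin p,
          2 * (Real.pi : ℂ) * Complex.I * ((q.1 t.1 : ℕ) : ℂ) * ((q.2 t.2 : ℕ) : ℂ) *
            2 ^ (t.1 : ℕ) * (w t.2.1 : ℂ) / 2 ^ (m + (t.2.2 : ℕ) + 1))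
        = 2 * Real.pi * Complex.I * ((ancVal q.1 : ℕ) : ℂ) *
          ((∑ j : Fin n, w j * ∑ k : Fin p, ((x (j, k) : ℕ) : ℝ) / 2 ^ ((k : ℕ) + 1) : ℝ) : ℂ)
          / 2 ^ m := by
      rw [hanc, hS]
      simp only [hx]
      rw [Fintype.sum_prod_type]
      simp only [Finset.mul_sum, Finset.sum_mul, Finset.sum_div]
      refine Eq.trans (Finset.sum_congr rfl fun c _ => Fintype.sum_prod_type _) ?_
      rw [Finset.sum_comm]
      refine Finset.sum_congr rfl fun j _ => ?_
      rw [Finset.sum_comm]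
      refine Finset.sum_congr rfl fun k _ => Finset.sum_congr rfl fun c _ => ?_
      rw [pow_add, pow_add]
      ring
    rw [hsum]
    ring
  · simp [hx]
end

section
/- Let n, p, m be positive integers, w ∈ [−1,1]^n, and x_{j,k} ∈ {0,1} for j = 0,…,n−1, k = 1,…,p, with |x⟩ := ⊗_{j,k}|x_{j,k}⟩ ∈ ℂ^{2^{np}}, and let U_{w,m} be the product over c ∈ {1,…,m}, j, k of (cRz^{c,j,k}(w_j/2^{m+k}))^{2^{c−1}}, where cRz^{c,j,k}(α) is the diagonal unitary on ℂ^{2^m} ⊗ ℂ^{2^{np}} multiplying a computational basis vector |a_1…a_m⟩ ⊗ |x_{0,1}…x_{n−1,p}⟩ by e^{2πiα} when a_c = 1 and x_{j,k} = 1 (identifying |a_1…a_m⟩ with |a⟩ for a = Σ_c a_c 2^{c−1}). If x̃ᵀw := Σ_{j=0}^{n−1} w_j Σ_{k=1}^{p} x_{j,k} 2^{−k} is an integer K ∈ {0,…,2^m−1}, then U_{w,m}(H^{⊗m}|0⟩^{⊗m} ⊗ |x⟩) = (qF|K⟩) ⊗ |x⟩, where qF is the operator on ℂ^{2^m} with qF|j⟩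 = 2^{−m/2} Σ_{k=0}^{2^m−1} exp(2πi jk/2^m)|k⟩. -/
open Complex

/-- The quantum Fourier transform of the basis state `|K⟩` of `ℂ^{2^m}`:
`qF|K⟩ = 2^{−m/2} Σ_{k=0}^{2^m−1} exp(2πi K k/2^m)|k⟩`, expressed on the bit-string
basis `a ↦ |a⟩`, `a = Σ_c a_c 2^{c−1}`. -/
noncomputable def qFket (m K : ℕ) : (Fin m → Fin 2) → ℂ :=
  fun a => ((Real.sqrt (2 ^ m) : ℝ) : ℂ)⁻¹ *
    Complex.exp (2 * Real.pi * Complex.I * K * (ancVal a : ℕ) / 2 ^ m)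

lemma diag_list_prod {ι β : Type*} [DecidableEq ι] [Fintype ι]
    (l : List β) (f : β → ι → ℂ) :
    (l.map fun t => Matrix.diagonal (f t)).prod
      = Matrix.diagonal (fun i => (l.map fun t => f t i).prod) := by
  induction l with
  | nil => simp [Matrix.diagonal_one]
  | cons a l ih =>
      simp only [List.map_cons, List.prod_cons, ih, Matrix.diagonal_mul_diagonal]

lemma fin2_cast (b : Fin 2) : ((b : ℕ) : ℂ) = if b = 1 then 1 else 0 := by
  fin_cases b <;> simp

/-- if `x̃ᵀw = Σ_j w_j Σ_k x_{j,k} 2^{−k}` is an integer `K ∈ {0,…,2^m−1}`,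
then `U_{w,m}(H^{⊗m}|0⟩^{⊗m} ⊗ |x⟩) = (qF|K⟩) ⊗ |x⟩`, where `U_{w,m}` is the product
(in any order: the list `l` enumerates the factors; all factors commute) over `c,j,k` of
`(cRz^{c,j,k}(w_j/2^{m+k}))^{2^{c−1}}`, and `H^{⊗m}|0⟩^{⊗m} = (1/√(2^m)) Σ_a |a⟩`. -/
theorem U_apply_eq_qft_ket (n p m : ℕ) (hn : 0 < n) (hp : 0 < p) (hm : 0 < m)
    (w : Fin n → ℝ) (hw : ∀ j, w j ∈ Set.Icc (-1 : ℝ) 1)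
    (x : Fin n × Fin p → Fin 2)
    (K : ℕ) (hK : K < 2 ^ m)
    (hval : (∑ j : Fin n, w j * ∑ k : Fin p, ((x (j, k) : ℕ) : ℝ) / 2 ^ ((k : ℕ) + 1))
      = (K : ℝ))
    (l : List (Fin m × Fin n × Fin p)) (hnodup : l.Nodup) (hmem : ∀ t, t ∈ l) :
    (l.map fun t =>
        (cRzGate m n p t.1 t.2.1 t.2.2 (w t.2.1 / 2 ^ (m + (t.2.2 : ℕ) + 1)))
          ^ (2 ^ (t.1 : ℕ))).prod.mulVec
      (kronVec (fun _ : Fin m → Fin 2 => ((Real.sqrt (2 ^ m) : ℝ) : ℂ)⁻¹)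
        (fun y : Fin n × Fin p → Fin 2 => if y = x then 1 else 0)) =
    kronVec (qFket m K) (fun y : Fin n × Fin p → Fin 2 => if y = x then 1 else 0) := by
  classical
  set g : (Fin m × Fin n × Fin p) → ((Fin m → Fin 2) × (Fin n × Fin p → Fin 2)) → ℂ :=
    fun t q => Complex.exp (((q.1 t.1 : ℕ) : ℂ) * ((q.2 (t.2.1, t.2.2) : ℕ) : ℂ)
      * 2 ^ (t.1 : ℕ) * (2 * Real.pi * Complex.I * (w t.2.1 / 2 ^ (m + (t.2.2 : ℕ) + 1))))
    with hg
  have hfac : ∀ t : Fin m × Fin n × Fin p,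
      (cRzGate m n p t.1 t.2.1 t.2.2 (w t.2.1 / 2 ^ (m + (t.2.2 : ℕ) + 1))) ^ (2 ^ (t.1 : ℕ))
        = Matrix.diagonal (g t) := by
    intro t
    rw [cRzGate, Matrix.diagonal_pow]
    refine congrArg Matrix.diagonal (funext fun q => ?_)
    rw [hg]
    simp only [Pi.pow_apply]
    by_cases h : q.1 t.1 = 1 ∧ q.2 (t.2.1, t.2.2) = 1
    · rw [if_pos h, fin2_cast, fin2_cast, if_pos h.1, if_pos h.2, one_mul, one_mul,
        ← Complex.exp_nat_mul]
      push_cast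
      ring_nf
    · rw [if_neg h, one_pow, fin2_cast, fin2_cast]
      rcases not_and_or.mp h with h' | h' <;> simp [h']
  simp only [hfac]
  rw [diag_list_prod]
  funext q
  obtain ⟨a, y⟩ := q
  rw [Matrix.mulVec_diagonal]
  by_cases hy : y = x
  · subst hy
    have hprod : (l.map fun t => g t (a, y)).prod
        = Complex.exp (2 * Real.pi * Complex.I * K * (ancVal a : ℕ) / 2 ^ m) := by
      have huniv : l.toFinset = Finset.univ :=
        Finset.eq_univ_iff_forall.mpr fun t => List.mem_toFinset.mpr (hmem t)
      rw [← List.prod_toFinset _ hnodup, huniv, hg]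
      simp only
      rw [← Complex.exp_sum]
      congr 1
      have hvalC := congrArg (Complex.ofReal) hval
      push_cast at hvalC
      rw [← hvalC, ancVal]
      push_cast
      rw [Fintype.sum_prod_type]
      simp_rw [Fintype.sum_prod_type]
      simp_rw [Finset.mul_sum, Finset.sum_mul, Finset.sum_div]
      refine Finset.sum_congr rfl fun c _ => Finset.sum_congr rfl fun j _ =>
        Finset.sum_congr rfl fun k _ => ?_
      rw [show m + (k : ℕ) + 1 = m + ((k : ℕ) + 1) by ring, pow_add]
      ring
    simp [kronVec, qFket, hprod, mul_comm]
  · simp [kronVec, hy]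
end
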